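/- Let F be a real n×p matrix and let k ≥ 1 be an even integer with 2.5k ≤ p satisfying δ_{1.5k} + θ_{k,1.5k} < 1. Let β ∈ ℝ^p and y = Fβ + z where the noise z ∈ ℝ^n satisfies ‖Fᵀz‖_∞ ≤ λ for some λ ≥ 0. If β̂ is a minimizer of ‖γ‖₁ over all γ ∈ ℝ^p with ‖Fᵀ(y − Fγ)‖_∞ ≤ λ (the Dantzig selector), then ‖β̂ − β‖₂ ≤ C₁ √k λ + C₂ k^{−1/2} ‖β_{−max(k)}‖₁, where C₁ = 2√3 / (1 − δ_{1.5k} − θ_{k,1.5k}) and C₂ = 2√2(1 − δ_{1.5k}) / (1 − δ_{1.5k} − θ_{k,1.5k}). -/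

import Mathlib

/-- A vector `v ∈ ℝ^p` is `k`-sparse if it has at most `k` nonzero entries. -/
def IsSparse {p : ℕ} (k : ℕ) (v : Fin p → ℝ) : Prop :=
  ∃ s : Finset (Fin p), s.card ≤ k ∧ ∀ i ∉ s, v i = 0

/-- The ℓ₂ norm of a vector in `ℝ^m`. -/
noncomputable def l2norm {m : ℕ} (v : Fin m → ℝ) : ℝ :=
  Real.sqrt (∑ i, v i ^ 2)

/-- The ℓ₁ norm of a vector in `ℝ^m`. -/
def l1norm {m : ℕ} (v : Fin m → ℝ) : ℝ := ∑ i, |v i|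

/-- The `k`-restricted isometry constant `δ_k` of `F`: the smallest `δ` such that
`√(1-δ)‖c‖₂ ≤ ‖Fc‖₂ ≤ √(1+δ)‖c‖₂` for every `k`-sparse vector `c`. -/
noncomputable def ripConst {n p : ℕ} (F : Matrix (Fin n) (Fin p) ℝ) (k : ℕ) : ℝ :=
  sInf {δ : ℝ | ∀ c : Fin p → ℝ, IsSparse k c →
    Real.sqrt (1 - δ) * l2norm c ≤ l2norm (F.mulVec c) ∧
    l2norm (F.mulVec c) ≤ Real.sqrt (1 + δ) * l2norm c}

/-- The `(k,k')`-restricted orthogonality constant `θ_{k,k'}` of `F`: the smallest `θ` such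
that `|⟨Fc, Fc'⟩| ≤ θ‖c‖₂‖c'‖₂` for all `k`-sparse `c` and `k'`-sparse `c'` with disjoint
supports. -/
noncomputable def roConst {n p : ℕ} (F : Matrix (Fin n) (Fin p) ℝ) (k k' : ℕ) : ℝ :=
  sInf {θ : ℝ | ∀ c c' : Fin p → ℝ, IsSparse k c → IsSparse k' c' →
    (∀ i, c i = 0 ∨ c' i = 0) →
    |∑ i, F.mulVec c i * F.mulVec c' i| ≤ θ * (l2norm c * l2norm c')}

/-! Write `h = β̂ - β`. Feasibility of `β` and of `β̂` puts `h` in the tube `‖FᵀFh‖_∞ ≤ 2λ`, and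
`ℓ₁`-minimality of `β̂` puts it in the cone `‖h_{Tᶜ}‖₁ ≤ ‖h_T‖₁ + 2‖β_{Tᶜ}‖₁`. Let `U` be `T`
together with the `m` largest entries of `h` off `T`, and split `h = h_U + h_{Uᶜ}`. Restricted
isometry gives `(1 - δ)‖h_U‖₂² ≤ ⟨Fh, Fh_U⟩ - ⟨Fh_{Uᶜ}, Fh_U⟩`. The tube bounds the first term by
`2λ‖h_U‖₁`; the second is bounded via `θ` by a shifting inequality that cuts `h_{Uᶜ}` into blocks
of size `k = 2m`, and the resulting `ℓ₁` tail is controlled by the cone. This bounds `‖h_U‖₂`, and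
`‖h_{Uᶜ}‖₂` obeys the same bound. -/

open Finset Matrix

section Norms

variable {p : ℕ}

lemma l2norm_nonneg (v : Fin p → ℝ) : 0 ≤ l2norm v := Real.sqrt_nonneg _

lemma l1norm_nonneg (v : Fin p → ℝ) : 0 ≤ l1norm v := sum_nonneg fun i _ => abs_nonneg (v i)

lemma l2norm_sq (v : Fin p → ℝ) : l2norm v ^ 2 = ∑ i, v i ^ 2 :=
  Real.sq_sqrt (sum_nonneg fun _ _ => sq_nonneg _)

lemma l2norm_sq_eq_dotProduct (v : Fin p → ℝ) : l2norm v ^ 2 = v ⬝ᵥ v := by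
  rw [l2norm_sq]
  simp only [dotProduct, sq]

lemma abs_dotProduct_le_l2norm_mul (v w : Fin p → ℝ) : |v ⬝ᵥ w| ≤ l2norm v * l2norm w := by
  refine abs_le_of_sq_le_sq ?_ (mul_nonneg (l2norm_nonneg v) (l2norm_nonneg w))
  rw [mul_pow, l2norm_sq, l2norm_sq]
  exact sum_mul_sq_le_sq_mul_sq univ v w

lemma abs_dotProduct_le_mul_l1norm {v w : Fin p → ℝ} {L : ℝ} (hv : ∀ i, |v i| ≤ L) :
    |v ⬝ᵥ w| ≤ L * l1norm w := by
  rw [l1norm, mul_sum]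
  refine (abs_sum_le_sum_abs _ _).trans (sum_le_sum fun i _ => ?_)
  rw [abs_mul]
  exact mul_le_mul_of_nonneg_right (hv i) (abs_nonneg _)

lemma sum_abs_le_sqrt_card_mul (s : Finset (Fin p)) (v : Fin p → ℝ) :
    ∑ i ∈ s, |v i| ≤ √(#s : ℝ) * √(∑ i ∈ s, v i ^ 2) := by
  rw [← Real.sqrt_mul (Nat.cast_nonneg _)]
  refine Real.le_sqrt_of_sq_le ?_
  simpa only [sq_abs] using sq_sum_le_card_mul_sum_sq (s := s) (f := fun i => |v i|)

lemma l1norm_indicator (s : Finset (Fin p)) (v : Fin p → ℝ) :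
    l1norm ((s : Set (Fin p)).indicator v) = ∑ i ∈ s, |v i| := by
  rw [l1norm, ← sum_indicator_subset _ (subset_univ s)]
  congr 1 with i
  by_cases hi : i ∈ s <;> simp [hi]

lemma l2norm_indicator (s : Finset (Fin p)) (v : Fin p → ℝ) :
    l2norm ((s : Set (Fin p)).indicator v) = √(∑ i ∈ s, v i ^ 2) := by
  rw [l2norm, ← sum_indicator_subset _ (subset_univ s)]
  congr 2 with i
  by_cases hi : i ∈ s <;> simp [hi]

lemma abs_indicator_le (s : Set (Fin p)) (v : Fin p → ℝ) (i : Fin p) :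
    |s.indicator v i| ≤ |v i| := by
  simpa only [Real.norm_eq_abs] using norm_indicator_le_norm_self v i

lemma l2norm_sq_eq_indicator_add_compl (s : Finset (Fin p)) (v : Fin p → ℝ) :
    l2norm v ^ 2 =
      l2norm ((s : Set (Fin p)).indicator v) ^ 2 + l2norm ((↑sᶜ : Set (Fin p)).indicator v) ^ 2 := by
  have hsq : ∀ t : Finset (Fin p), √(∑ i ∈ t, v i ^ 2) ^ 2 = ∑ i ∈ t, v i ^ 2 := fun t =>
    Real.sq_sqrt (sum_nonneg fun _ _ => sq_nonneg _)
  rw [l2norm_indicator, l2norm_indicator, hsq, hsq, l2norm_sq, sum_add_sum_compl]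

lemma indicator_add_indicator_compl (s : Finset (Fin p)) (v : Fin p → ℝ) :
    (s : Set (Fin p)).indicator v + (↑sᶜ : Set (Fin p)).indicator v = v := by
  rw [coe_compl]
  exact Set.indicator_self_add_compl _ v

lemma IsSparse.mono {k k' : ℕ} {v : Fin p → ℝ} (hv : IsSparse k v) (hk : k ≤ k') :
    IsSparse k' v :=
  let ⟨s, hs, hvs⟩ := hv
  ⟨s, hs.trans hk, hvs⟩

lemma isSparse_indicator (s : Finset (Fin p)) (v : Fin p → ℝ) :
    IsSparse #s ((s : Set (Fin p)).indicator v) :=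
  ⟨s, le_rfl, fun _ hi => Set.indicator_of_notMem (by simpa using hi) v⟩

lemma l1norm_le_sqrt_mul_l2norm {k : ℕ} {v : Fin p → ℝ} (hv : IsSparse k v) :
    l1norm v ≤ √(k : ℝ) * l2norm v := by
  obtain ⟨s, hsk, hs⟩ := hv
  have hv : (s : Set (Fin p)).indicator v = v :=
    Set.indicator_eq_self.2 fun i hi => by_contra fun h => hi (hs i (by simpa using h))
  rw [← hv, l1norm_indicator, l2norm_indicator]
  refine (sum_abs_le_sqrt_card_mul s v).trans ?_
  gcongr

/-- AM-GM applied to `‖v‖₂² ≤ ‖v‖_∞ ‖v‖₁`. -/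
lemma l2norm_le_of_abs_le {v : Fin p → ℝ} {c : ℝ} (hc0 : 0 ≤ c) (hc : ∀ i, |v i| ≤ c)
    {a : ℝ} (ha : 0 < a) : l2norm v ≤ a * c / 2 + l1norm v / (2 * a) := by
  refine Real.sqrt_le_iff.2 ⟨by positivity [l1norm_nonneg v], ?_⟩
  calc ∑ i, v i ^ 2 ≤ ∑ i, c * |v i| := sum_le_sum fun i _ => by
          rw [← sq_abs, sq]; exact mul_le_mul_of_nonneg_right (hc i) (abs_nonneg _)
    _ = c * l1norm v := by rw [l1norm, mul_sum]
    _ ≤ (a * c / 2 + l1norm v / (2 * a)) ^ 2 := by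
        have : (a * c / 2 + l1norm v / (2 * a)) ^ 2 - c * l1norm v =
            (a * c / 2 - l1norm v / (2 * a)) ^ 2 := by field_simp; ring
        linarith [sq_nonneg (a * c / 2 - l1norm v / (2 * a))]

end Norms

section RestrictedConstants

variable {n p : ℕ}

lemma l2norm_mulVec_sq_le (F : Matrix (Fin n) (Fin p) ℝ) (c : Fin p → ℝ) :
    l2norm (F *ᵥ c) ^ 2 ≤ (∑ i, l2norm (F i) ^ 2) * l2norm c ^ 2 := by
  rw [l2norm_sq, sum_mul]
  refine sum_le_sum fun i _ => ?_
  rw [← mul_pow, ← sq_abs]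
  exact pow_le_pow_left₀ (abs_nonneg _) (abs_dotProduct_le_l2norm_mul (F i) c) 2

lemma exists_l2norm_mulVec_le (F : Matrix (Fin n) (Fin p) ℝ) :
    ∃ M, 0 ≤ M ∧ ∀ c, l2norm (F *ᵥ c) ≤ M * l2norm c :=
  ⟨√(∑ i, l2norm (F i) ^ 2), Real.sqrt_nonneg _, fun c => by
    rw [← Real.sqrt_sq (l2norm_nonneg c), ← Real.sqrt_mul (sum_nonneg fun _ _ => sq_nonneg _)]
    exact Real.le_sqrt_of_sq_le (l2norm_mulVec_sq_le F c)⟩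

lemma le_sInf_mul_of_forall_le_mul {s : Set ℝ} (hs : s.Nonempty) {a b : ℝ} (hb : 0 ≤ b)
    (h : ∀ t ∈ s, a ≤ t * b) : a ≤ sInf s * b := by
  rcases hb.eq_or_lt with rfl | hb
  · obtain ⟨t, ht⟩ := hs
    simpa using h t ht
  · rw [← div_le_iff₀ hb]
    exact le_csInf hs fun t ht => (div_le_iff₀ hb).2 (h t ht)

lemma one_sub_ripConst_mul_le (F : Matrix (Fin n) (Fin p) ℝ) {k : ℕ} {c : Fin p → ℝ}
    (hc : IsSparse k c) : (1 - ripConst F k) * l2norm c ^ 2 ≤ l2norm (F *ᵥ c) ^ 2 := by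
  suffices l2norm c ^ 2 - l2norm (F *ᵥ c) ^ 2 ≤ ripConst F k * l2norm c ^ 2 by linarith
  obtain ⟨M, hM, hFM⟩ := exists_l2norm_mulVec_le F
  -- `δ = M² + 1` makes the lower isometry bound vacuous
  have hne : ∃ δ, ∀ c : Fin p → ℝ, IsSparse k c →
      √(1 - δ) * l2norm c ≤ l2norm (F *ᵥ c) ∧ l2norm (F *ᵥ c) ≤ √(1 + δ) * l2norm c := by
    refine ⟨M ^ 2 + 1, fun c _ => ⟨?_, (hFM c).trans ?_⟩⟩
    · rw [Real.sqrt_eq_zero'.2 (by nlinarith), zero_mul]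
      exact l2norm_nonneg _
    · exact mul_le_mul_of_nonneg_right (Real.le_sqrt_of_sq_le (by linarith)) (l2norm_nonneg c)
  refine le_sInf_mul_of_forall_le_mul hne (sq_nonneg _) fun δ hδ => ?_
  have hlow := (hδ c hc).1
  rcases le_total 0 (1 - δ) with h | h
  · have := pow_le_pow_left₀ (mul_nonneg (Real.sqrt_nonneg _) (l2norm_nonneg c)) hlow 2
    rw [mul_pow, Real.sq_sqrt h] at this
    linarith
  · nlinarith [sq_nonneg (l2norm c)]

lemma abs_dotProduct_mulVec_le_roConst (F : Matrix (Fin n) (Fin p) ℝ) {k k' : ℕ}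
    {c c' : Fin p → ℝ} (hc : IsSparse k c) (hc' : IsSparse k' c')
    (hdisj : ∀ i, c i = 0 ∨ c' i = 0) :
    |(F *ᵥ c) ⬝ᵥ (F *ᵥ c')| ≤ roConst F k k' * (l2norm c * l2norm c') := by
  obtain ⟨M, hM, hFM⟩ := exists_l2norm_mulVec_le F
  refine le_sInf_mul_of_forall_le_mul ⟨M ^ 2, fun c c' _ _ _ => ?_⟩
    (mul_nonneg (l2norm_nonneg _) (l2norm_nonneg _)) fun θ hθ => hθ c c' hc hc' hdisj
  calc |(F *ᵥ c) ⬝ᵥ (F *ᵥ c')| ≤ l2norm (F *ᵥ c) * l2norm (F *ᵥ c') :=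
        abs_dotProduct_le_l2norm_mul _ _
    _ ≤ (M * l2norm c) * (M * l2norm c') :=
        mul_le_mul (hFM c) (hFM c') (l2norm_nonneg _) (mul_nonneg hM (l2norm_nonneg c))
    _ = M ^ 2 * (l2norm c * l2norm c') := by ring

lemma roConst_nonneg (F : Matrix (Fin n) (Fin p) ℝ) {k k' : ℕ} (hk : 1 ≤ k) (hk' : 1 ≤ k')
    (hp : 2 ≤ p) : 0 ≤ roConst F k k' := by
  have hunit : ∀ {k : ℕ}, 1 ≤ k → ∀ i : Fin p,
      IsSparse k (Pi.single i 1) ∧ l2norm (Pi.single i (1 : ℝ)) = 1 :=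
    fun hk i => ⟨⟨{i}, by simpa using hk, fun j hj => by simp_all⟩, by simp [l2norm, Pi.single_apply]⟩
  let i₀ : Fin p := ⟨0, by omega⟩
  let i₁ : Fin p := ⟨1, by omega⟩
  have hne : i₀ ≠ i₁ := by simp [i₀, i₁, Fin.ext_iff]
  have := abs_dotProduct_mulVec_le_roConst F (hunit hk i₀).1 (hunit hk' i₁).1 fun i => by
    by_cases h : i = i₀ <;> simp_all [Pi.single_apply]
  rw [(hunit hk i₀).2, (hunit hk' i₁).2, mul_one, mul_one] at this
  exact (abs_nonneg _).trans this

end RestrictedConstants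

section Shifting

lemma Finset.exists_subset_card_eq_forall_sdiff_le {α β : Type*} [DecidableEq α] [LinearOrder β]
    (f : α → β) (s : Finset α) {k : ℕ} (hk : k ≤ #s) :
    ∃ t ⊆ s, #t = k ∧ ∀ i ∈ t, ∀ j ∈ s \ t, f j ≤ f i := by
  induction k with
  | zero => exact ⟨∅, empty_subset s, rfl, by simp⟩
  | succ k ih =>
    obtain ⟨t, hts, htk, ht⟩ := ih (by omega)
    obtain ⟨x, hx, hxmax⟩ := exists_max_image (s \ t) f <| by
      rw [← card_pos, card_sdiff_of_subset hts]; omega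
    obtain ⟨hxs, hxt⟩ := mem_sdiff.1 hx
    refine ⟨insert x t, insert_subset hxs hts, by rw [card_insert_of_notMem hxt, htk], ?_⟩
    intro i hi j hj
    have hj' : j ∈ s \ t := by simp only [mem_sdiff, mem_insert, not_or] at hj ⊢; tauto
    rcases mem_insert.1 hi with rfl | hi
    · exact hxmax j hj'
    · exact ht i hi j hj'

lemma Finset.exists_subset_card_eq_threshold {α β : Type*} [DecidableEq α] [LinearOrder β]
    (f : α → β) (s : Finset α) {k : ℕ} (hk0 : 0 < k) (hk : k ≤ #s) :
    ∃ t ⊆ s, #t = k ∧ ∃ i₀ ∈ t, (∀ i ∈ t, f i₀ ≤ f i) ∧ ∀ j ∈ s \ t, f j ≤ f i₀ := by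
  obtain ⟨t, hts, htk, ht⟩ := exists_subset_card_eq_forall_sdiff_le f s hk
  obtain ⟨i₀, hi₀, hmin⟩ := exists_min_image t f (by rw [← card_pos, htk]; exact hk0)
  exact ⟨t, hts, htk, i₀, hi₀, hmin, ht i₀ hi₀⟩

variable {p : ℕ}

/-- Shifting inequality: peel off the `k` largest entries of `u` and recurse on the rest; the
AM-GM slack `‖v‖₁ / (2√k)` of each block pays for the `ℓ∞` term of the next one. -/
theorem abs_map_le_of_forall_isSparse (φ : (Fin p → ℝ) →+ ℝ) {k : ℕ} (hk : 0 < k) {K : ℝ}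
    (hK : 0 ≤ K) (s : Finset (Fin p))
    (hφ : ∀ v, IsSparse k v → (∀ i ∉ s, v i = 0) → |φ v| ≤ K * l2norm v)
    (u : Fin p → ℝ) (hu : ∀ i ∉ s, u i = 0) {c : ℝ} (hc0 : 0 ≤ c) (hc : ∀ i, |u i| ≤ c) :
    |φ u| ≤ K * (√(k : ℝ) * c / 2 + l1norm u / √(k : ℝ)) := by
  have hsk : 0 < √(k : ℝ) := Real.sqrt_pos.2 (Nat.cast_pos.2 hk)
  have hhalf : ∀ v : Fin p → ℝ, l1norm v / (2 * √(k : ℝ)) ≤ l1norm v / √(k : ℝ) := fun v =>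
    div_le_div_of_nonneg_left (l1norm_nonneg v) hsk (by linarith)
  induction s using Finset.strongInduction generalizing u c with
  | H s ih =>
  by_cases hs : #s ≤ k
  · calc |φ u| ≤ K * l2norm u := hφ u ⟨s, hs, hu⟩ hu
      _ ≤ K * (√(k : ℝ) * c / 2 + l1norm u / (2 * √(k : ℝ))) :=
          mul_le_mul_of_nonneg_left (l2norm_le_of_abs_le hc0 hc hsk) hK
      _ ≤ _ := mul_le_mul_of_nonneg_left (by linarith [hhalf u]) hK
  obtain ⟨B, hBs, hBk, i₀, hi₀, hmin, hmax⟩ :=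
    exists_subset_card_eq_threshold (fun i => |u i|) s hk (by omega)
  set uB := (B : Set (Fin p)).indicator u
  set uR := (↑Bᶜ : Set (Fin p)).indicator u
  have hB : |φ uB| ≤ K * (√(k : ℝ) * c / 2 + l1norm uB / (2 * √(k : ℝ))) := by
    refine (hφ uB (hBk ▸ isSparse_indicator B u) fun i hi => ?_).trans ?_
    · exact Set.indicator_of_notMem (fun h => hi (hBs h)) u
    refine mul_le_mul_of_nonneg_left (l2norm_le_of_abs_le hc0 (fun i => ?_) hsk) hK
    exact (abs_indicator_le _ u i).trans (hc i)
  have hR : |φ uR| ≤ K * (√(k : ℝ) * |u i₀| / 2 + l1norm uR / √(k : ℝ)) := by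
    have huR : ∀ i, uR i = if i ∈ B then 0 else u i := fun i => by
      by_cases hi : i ∈ B <;> simp [uR, hi]
    refine ih (s \ B) (sdiff_ssubset hBs ⟨i₀, hi₀⟩) (fun v hv hvs => hφ v hv fun i hi => hvs i
      fun h => hi (mem_sdiff.1 h).1) uR (fun i hi => ?_) (abs_nonneg _) fun i => ?_
    all_goals by_cases hiB : i ∈ B <;> simp only [huR, hiB, if_true, if_false, abs_zero, abs_nonneg]
    · exact hu i fun his => hi (mem_sdiff.2 ⟨his, hiB⟩)
    · by_cases his : i ∈ s
      · exact hmax i (mem_sdiff.2 ⟨his, hiB⟩)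
      · simp [hu i his]
  have hi₀B : √(k : ℝ) * |u i₀| / 2 ≤ l1norm uB / (2 * √(k : ℝ)) := by
    have := card_nsmul_le_sum B (fun i => |u i|) _ hmin
    rw [hBk, nsmul_eq_mul, ← l1norm_indicator] at this
    rw [le_div_iff₀ (by positivity)]
    calc √(k : ℝ) * |u i₀| / 2 * (2 * √(k : ℝ)) = (√(k : ℝ) * √(k : ℝ)) * |u i₀| := by ring
      _ = k * |u i₀| := by rw [Real.mul_self_sqrt (Nat.cast_nonneg k)]
      _ ≤ _ := this
  have hsplit : l1norm uB + l1norm uR = l1norm u := by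
    rw [l1norm_indicator, l1norm_indicator, sum_add_sum_compl]; rfl
  calc |φ u| = |φ uB + φ uR| := by rw [← map_add, indicator_add_indicator_compl]
    _ ≤ |φ uB| + |φ uR| := abs_add_le _ _
    _ ≤ K * (√(k : ℝ) * c / 2 + l1norm uB / (2 * √(k : ℝ))) +
        K * (l1norm uB / (2 * √(k : ℝ)) + l1norm uR / √(k : ℝ)) :=
          add_le_add hB (hR.trans (mul_le_mul_of_nonneg_left (by linarith) hK))
    _ = K * (√(k : ℝ) * c / 2 + l1norm u / √(k : ℝ)) := by
        rw [← hsplit]; field_simp; ring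

end Shifting

section Dantzig

variable {n p : ℕ}

lemma abs_dotProduct_mulVec_le_roConst_of_abs_le (F : Matrix (Fin n) (Fin p) ℝ) {k k' : ℕ}
    (hk : 0 < k) (hθ : 0 ≤ roConst F k k') {w : Fin p → ℝ} (hw : IsSparse k' w)
    {u : Fin p → ℝ} (hdisj : ∀ i, u i = 0 ∨ w i = 0) {c : ℝ} (hc0 : 0 ≤ c)
    (hc : ∀ i, |u i| ≤ c) :
    |(F *ᵥ u) ⬝ᵥ (F *ᵥ w)| ≤
      roConst F k k' * l2norm w * (√(k : ℝ) * c / 2 + l1norm u / √(k : ℝ)) := by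
  let φ : (Fin p → ℝ) →+ ℝ := AddMonoidHom.mk' (fun v => (F *ᵥ v) ⬝ᵥ (F *ᵥ w)) fun v v' => by
    simp only [mulVec_add, add_dotProduct]
  refine abs_map_le_of_forall_isSparse φ hk (mul_nonneg hθ (l2norm_nonneg w)) {i | w i = 0}
    (fun v hv hvs => ?_) u (fun i hi => (hdisj i).resolve_right (by simpa using hi)) hc0 hc
  calc |φ v| ≤ roConst F k k' * (l2norm v * l2norm w) :=
        abs_dotProduct_mulVec_le_roConst F hv hw fun i => by
          by_cases hi : w i = 0
          · exact Or.inr hi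
          · exact Or.inl (hvs i (by simpa using hi))
    _ = roConst F k k' * l2norm w * l2norm v := by ring

lemma abs_mulVec_dotProduct_mulVec_le (F : Matrix (Fin n) (Fin p) ℝ) {h : Fin p → ℝ} {L : ℝ}
    (hL : ∀ j, |(Fᵀ *ᵥ (F *ᵥ h)) j| ≤ L) (v : Fin p → ℝ) :
    |(F *ᵥ h) ⬝ᵥ (F *ᵥ v)| ≤ L * l1norm v := by
  rw [dotProduct_mulVec, ← mulVec_transpose]
  exact abs_dotProduct_le_mul_l1norm hL

lemma abs_transpose_mulVec_mulVec_sub_le (F : Matrix (Fin n) (Fin p) ℝ) {y : Fin n → ℝ}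
    {a b : Fin p → ℝ} {lam : ℝ} (ha : ∀ j, |(Fᵀ *ᵥ (y - F *ᵥ a)) j| ≤ lam)
    (hb : ∀ j, |(Fᵀ *ᵥ (y - F *ᵥ b)) j| ≤ lam) (j : Fin p) :
    |(Fᵀ *ᵥ (F *ᵥ (a - b))) j| ≤ 2 * lam := by
  have : Fᵀ *ᵥ (F *ᵥ (a - b)) = Fᵀ *ᵥ (y - F *ᵥ b) - Fᵀ *ᵥ (y - F *ᵥ a) := by
    simp only [mulVec_sub]; abel
  rw [this, Pi.sub_apply]
  linarith [abs_sub ((Fᵀ *ᵥ (y - F *ᵥ b)) j) ((Fᵀ *ᵥ (y - F *ᵥ a)) j), ha j, hb j]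

lemma sum_compl_abs_sub_le {x β : Fin p → ℝ} (hx : l1norm x ≤ l1norm β) (T : Finset (Fin p)) :
    ∑ i ∈ Tᶜ, |x i - β i| ≤ ∑ i ∈ T, |x i - β i| + 2 * ∑ i ∈ Tᶜ, |β i| := by
  have hTc : ∑ i ∈ Tᶜ, |x i - β i| ≤ ∑ i ∈ Tᶜ, |x i| + ∑ i ∈ Tᶜ, |β i| := by
    rw [← sum_add_distrib]; exact sum_le_sum fun i _ => abs_sub _ _
  have hT : ∑ i ∈ T, |β i| - ∑ i ∈ T, |x i| ≤ ∑ i ∈ T, |x i - β i| := by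
    rw [← sum_sub_distrib]
    exact sum_le_sum fun i _ => (abs_sub_abs_le_abs_sub _ _).trans_eq (abs_sub_comm _ _)
  rw [l1norm, l1norm, ← sum_add_sum_compl T, ← sum_add_sum_compl T (fun i => |β i|)] at hx
  linarith

lemma error_bound_of_ineqs {δ θ lam b A Q N m : ℝ} (hm : 0 < m) (hD : 0 < 1 - δ - θ)
    (hθ : 0 ≤ θ) (hlam : 0 ≤ lam) (hb : 0 ≤ b) (hA : 0 ≤ A) (hQ0 : 0 ≤ Q)
    (hmain : (1 - δ) * A ^ 2 ≤ 2 * lam * √(3 * m) * A + θ * A * Q)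
    (hQ : Q ≤ A + 2 * (b / √(2 * m))) (hN : N ^ 2 ≤ A ^ 2 + Q ^ 2) :
    N ≤ 2 * √3 / (1 - δ - θ) * √(2 * m) * lam +
      2 * √2 * (1 - δ) / (1 - δ - θ) * ((√(2 * m))⁻¹ * b) := by
  set s := √(2 * m)
  have hs : 0 < s := Real.sqrt_pos.2 (by linarith)
  have hbs : 0 ≤ b / s := div_nonneg hb hs.le
  have hDA : (1 - δ - θ) * A ≤ 2 * lam * √(3 * m) + 2 * θ * (b / s) := by
    rcases hA.eq_or_lt with rfl | hA
    · simp only [mul_zero]; positivity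
    · refine le_of_mul_le_mul_right ?_ hA
      nlinarith [mul_le_mul_of_nonneg_left hQ (mul_nonneg hθ hA.le)]
  have hNZ : N ≤ √2 * (A + 2 * (b / s)) := by
    rw [← Real.sqrt_sq (by positivity : 0 ≤ A + 2 * (b / s)), ← Real.sqrt_mul zero_le_two]
    exact Real.le_sqrt_of_sq_le (by nlinarith)
  have h23 : √2 * √(3 * m) = √3 * s := by
    rw [← Real.sqrt_mul zero_le_two, ← Real.sqrt_mul zero_le_three]; ring_nf
  calc N ≤ √2 * (A + 2 * (b / s)) := hNZ
    _ ≤ √2 * ((2 * lam * √(3 * m) + 2 * θ * (b / s)) / (1 - δ - θ) + 2 * (b / s)) := by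
        gcongr
        rw [le_div_iff₀ hD]; linarith
    _ = _ := by
        field_simp
        linear_combination lam * s * h23

lemma one_sub_ripConst_mul_sq_le_of_tube (F : Matrix (Fin n) (Fin p) ℝ) {h : Fin p → ℝ} {L : ℝ}
    (hL : 0 ≤ L) (htube : ∀ j, |(Fᵀ *ᵥ (F *ᵥ h)) j| ≤ L) {k : ℕ} (U : Finset (Fin p))
    (hU : #U ≤ k) :
    (1 - ripConst F k) * l2norm ((U : Set (Fin p)).indicator h) ^ 2 ≤
      L * √(k : ℝ) * l2norm ((U : Set (Fin p)).indicator h) +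
        |(F *ᵥ (↑Uᶜ : Set (Fin p)).indicator h) ⬝ᵥ (F *ᵥ (U : Set (Fin p)).indicator h)| := by
  set h₁ := (U : Set (Fin p)).indicator h
  set h₂ := (↑Uᶜ : Set (Fin p)).indicator h
  have hh₁ : IsSparse k h₁ := (isSparse_indicator U h).mono hU
  have hsplit : F *ᵥ h₁ = F *ᵥ h - F *ᵥ h₂ := by
    rw [← mulVec_sub, ← indicator_add_indicator_compl U h, add_sub_cancel_right]
  calc (1 - ripConst F k) * l2norm h₁ ^ 2 ≤ l2norm (F *ᵥ h₁) ^ 2 := one_sub_ripConst_mul_le F hh₁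
    _ = (F *ᵥ h) ⬝ᵥ (F *ᵥ h₁) - (F *ᵥ h₂) ⬝ᵥ (F *ᵥ h₁) := by
      rw [l2norm_sq_eq_dotProduct, ← sub_dotProduct, ← hsplit]
    _ ≤ L * l1norm h₁ + |(F *ᵥ h₂) ⬝ᵥ (F *ᵥ h₁)| := by
      linarith [le_abs_self ((F *ᵥ h) ⬝ᵥ (F *ᵥ h₁)), neg_abs_le ((F *ᵥ h₂) ⬝ᵥ (F *ᵥ h₁)),
        abs_mulVec_dotProduct_mulVec_le F htube h₁]
    _ ≤ _ := by
      rw [mul_assoc]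
      exact add_le_add_left (mul_le_mul_of_nonneg_left (l1norm_le_sqrt_mul_l2norm hh₁) hL) _

lemma tail_bound_of_cone {h : Fin p → ℝ} {T T₁ : Finset (Fin p)} {m : ℕ} (hm : 0 < m)
    (hT : #T = 2 * m) (hT₁ : T₁ ⊆ Tᶜ) (hT₁m : #T₁ = m) {c b : ℝ} (hc : ∀ i ∈ T₁, c ≤ |h i|)
    (hcone : ∑ i ∈ Tᶜ, |h i| ≤ ∑ i ∈ T, |h i| + 2 * b) :
    √(2 * m) * c / 2 + (∑ i ∈ Tᶜ \ T₁, |h i|) / √(2 * m) ≤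
      √(∑ i ∈ T ∪ T₁, h i ^ 2) + 2 * (b / √(2 * m)) := by
  set s := √(2 * (m : ℝ))
  have hs : 0 < s := Real.sqrt_pos.2 (by positivity)
  have hss : s * s = 2 * m := Real.mul_self_sqrt (by positivity)
  have hT₁c : m * c ≤ ∑ i ∈ T₁, |h i| := by
    simpa [hT₁m] using card_nsmul_le_sum T₁ (fun i => |h i|) c hc
  have hTc := sum_sdiff hT₁ (f := fun i => |h i|)
  have hTU : ∑ i ∈ T, |h i| ≤ s * √(∑ i ∈ T ∪ T₁, h i ^ 2) := by
    refine (sum_abs_le_sqrt_card_mul T h).trans ?_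
    rw [hT, Nat.cast_mul, Nat.cast_ofNat]
    exact mul_le_mul_of_nonneg_left (Real.sqrt_le_sqrt <|
      sum_le_sum_of_subset_of_nonneg subset_union_left fun _ _ _ => sq_nonneg _) hs.le
  refine le_of_mul_le_mul_right ?_ hs
  have hl : (s * c / 2 + (∑ i ∈ Tᶜ \ T₁, |h i|) / s) * s =
      s * s * c / 2 + ∑ i ∈ Tᶜ \ T₁, |h i| := by field_simp
  have hr : (√(∑ i ∈ T ∪ T₁, h i ^ 2) + 2 * (b / s)) * s =
      s * √(∑ i ∈ T ∪ T₁, h i ^ 2) + 2 * b := by field_simp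
  rw [hl, hr, hss]
  linarith

theorem l2norm_le_of_tube_of_cone (F : Matrix (Fin n) (Fin p) ℝ) {m : ℕ} (hm : 1 ≤ m)
    (hp : 5 * m ≤ p) (hcond : ripConst F (3 * m) + roConst F (2 * m) (3 * m) < 1)
    {lam b : ℝ} (hlam : 0 ≤ lam) (hb : 0 ≤ b) {h : Fin p → ℝ}
    (htube : ∀ j, |(Fᵀ *ᵥ (F *ᵥ h)) j| ≤ 2 * lam) {T : Finset (Fin p)} (hT : #T = 2 * m)
    (hcone : ∑ i ∈ Tᶜ, |h i| ≤ ∑ i ∈ T, |h i| + 2 * b) :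
    l2norm h ≤
      2 * √3 / (1 - ripConst F (3 * m) - roConst F (2 * m) (3 * m)) * √(2 * m) * lam +
      2 * √2 * (1 - ripConst F (3 * m)) / (1 - ripConst F (3 * m) - roConst F (2 * m) (3 * m)) *
        ((√(2 * m))⁻¹ * b) := by
  have hθ : 0 ≤ roConst F (2 * m) (3 * m) := roConst_nonneg F (by omega) (by omega) (by omega)
  obtain ⟨T₁, hT₁, hT₁m, i₀, -, hmin, hmax⟩ := exists_subset_card_eq_threshold
    (fun i => |h i|) Tᶜ hm (by rw [card_compl, hT, Fintype.card_fin]; omega)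
  set U := T ∪ T₁
  set h₁ := (U : Set (Fin p)).indicator h
  set h₂ := (↑Uᶜ : Set (Fin p)).indicator h
  set s := √(2 * (m : ℝ))
  have hs : 0 < s := Real.sqrt_pos.2 (by positivity)
  have hUc : Uᶜ = Tᶜ \ T₁ := by ext; simp [U]
  have hU : #U ≤ 3 * m := (card_union_le T T₁).trans (by omega)
  have hh₂ : ∀ i, |h₂ i| ≤ |h i₀| := fun i => by
    simp only [h₂, Set.indicator_apply, mem_coe]
    split_ifs with hi
    · exact hmax i (hUc ▸ hi)
    · simp
  set Q := s * |h i₀| / 2 + l1norm h₂ / s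
  have hcross : |(F *ᵥ h₂) ⬝ᵥ (F *ᵥ h₁)| ≤ roConst F (2 * m) (3 * m) * l2norm h₁ * Q := by
    have := abs_dotProduct_mulVec_le_roConst_of_abs_le F (by omega) hθ
      ((isSparse_indicator U h).mono hU) (u := h₂)
      (fun i => by by_cases hi : i ∈ U <;> simp [h₂, hi]) (abs_nonneg _) hh₂
    rwa [Nat.cast_mul, Nat.cast_ofNat] at this
  have hA := one_sub_ripConst_mul_sq_le_of_tube F (by linarith) htube U hU
  rw [Nat.cast_mul, Nat.cast_ofNat] at hA
  have hQ : Q ≤ l2norm h₁ + 2 * (b / s) := by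
    simp only [Q, h₁, h₂, l1norm_indicator, l2norm_indicator]
    rw [hUc]
    exact tail_bound_of_cone hm hT hT₁ hT₁m hmin hcone
  have htail : l2norm h₂ ≤ Q :=
    (l2norm_le_of_abs_le (abs_nonneg _) hh₂ hs).trans <| add_le_add le_rfl <|
      div_le_div_of_nonneg_left (l1norm_nonneg h₂) hs (by linarith)
  refine error_bound_of_ineqs (by positivity) (by linarith) hθ hlam hb (l2norm_nonneg _)
    (by positivity [l1norm_nonneg h₂]) (by linarith [hA, hcross]) hQ ?_
  rw [l2norm_sq_eq_indicator_add_compl U h]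
  exact add_le_add le_rfl (pow_le_pow_left₀ (l2norm_nonneg _) htail 2)

end Dantzig

theorem dantzig_selector_error_general {n p m : ℕ} (F : Matrix (Fin n) (Fin p) ℝ)
    (hm : 1 ≤ m) (hp : 5 * m ≤ p)
    (hcond : ripConst F (3 * m) + roConst F (2 * m) (3 * m) < 1)
    (β : Fin p → ℝ) (z : Fin n → ℝ) (y : Fin n → ℝ) (hy : y = fun i => F.mulVec β i + z i)
    (lam : ℝ) (hlam : 0 ≤ lam)
    (hz : ∀ j, |(Matrix.transpose F).mulVec z j| ≤ lam)
    (βhat : Fin p → ℝ)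
    (hfeas : ∀ j, |(Matrix.transpose F).mulVec (fun i => y i - F.mulVec βhat i) j| ≤ lam)
    (hmin : ∀ γ : Fin p → ℝ,
      (∀ j, |(Matrix.transpose F).mulVec (fun i => y i - F.mulVec γ i) j| ≤ lam) →
      l1norm βhat ≤ l1norm γ)
    (T : Finset (Fin p)) (hT : T.card = 2 * m) :
    l2norm (fun i => βhat i - β i) ≤
      (2 * Real.sqrt 3 / (1 - ripConst F (3 * m) - roConst F (2 * m) (3 * m))) *
        Real.sqrt (2 * m) * lam +
      (2 * Real.sqrt 2 * (1 - ripConst F (3 * m)) /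
        (1 - ripConst F (3 * m) - roConst F (2 * m) (3 * m))) *
        ((Real.sqrt (2 * m))⁻¹ * ∑ j ∈ Tᶜ, |β j|) := by
  have hβ : ∀ j, |(Fᵀ *ᵥ (y - F *ᵥ β)) j| ≤ lam := by
    have hz' : y - F *ᵥ β = z := by rw [hy]; ext i; simp
    simpa only [hz'] using hz
  exact l2norm_le_of_tube_of_cone F hm hp hcond hlam (sum_nonneg fun j _ => abs_nonneg (β j))
    (abs_transpose_mulVec_mulVec_sub_le F hfeas hβ) hT (sum_compl_abs_sub_le (hmin β hβ) T)

/-- Dantzig selector with bounded-correlation noise, general `β`.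
With `k = 2*m` even, `δ_{1.5k} + θ_{k,1.5k} < 1`, `y = Fβ + z`, `‖Fᵀz‖_∞ ≤ λ`, if `β̂`
minimizes the ℓ₁ norm subject to `‖Fᵀ(y - Fγ)‖_∞ ≤ λ`, then
`‖β̂ - β‖₂ ≤ C₁ √k λ + C₂ k^{-1/2} ‖β_{-max(k)}‖₁`. -/
theorem dantzig_selector_error {n p m : ℕ} (F : Matrix (Fin n) (Fin p) ℝ)
    (hm : 1 ≤ m) (hp : 5 * m ≤ p)
    (hcond : ripConst F (3 * m) + roConst F (2 * m) (3 * m) < 1)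
    (β : Fin p → ℝ) (z : Fin n → ℝ) (y : Fin n → ℝ) (hy : y = fun i => F.mulVec β i + z i)
    (lam : ℝ) (hlam : 0 ≤ lam)
    (hz : ∀ j, |(Matrix.transpose F).mulVec z j| ≤ lam)
    (βhat : Fin p → ℝ)
    (hfeas : ∀ j, |(Matrix.transpose F).mulVec (fun i => y i - F.mulVec βhat i) j| ≤ lam)
    (hmin : ∀ γ : Fin p → ℝ,
      (∀ j, |(Matrix.transpose F).mulVec (fun i => y i - F.mulVec γ i) j| ≤ lam) →
      l1norm βhat ≤ l1norm γ)
    (T : Finset (Fin p)) (hT : T.card = 2 * m)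
    (hTmax : ∀ i ∈ T, ∀ j ∉ T, |β j| ≤ |β i|) :
    l2norm (fun i => βhat i - β i) ≤
      (2 * Real.sqrt 3 / (1 - ripConst F (3 * m) - roConst F (2 * m) (3 * m))) *
        Real.sqrt (2 * m) * lam +
      (2 * Real.sqrt 2 * (1 - ripConst F (3 * m)) /
        (1 - ripConst F (3 * m) - roConst F (2 * m) (3 * m))) *
        ((Real.sqrt (2 * m))⁻¹ * ∑ j ∈ Tᶜ, |β j|) :=
  dantzig_selector_error_general F hm hp hcond β z y hy lam hlam hz βhat hfeas hmin T hT
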